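/- arXiv:0904.3469 — 2 statements merged into one kernel-verified Lean document; each statement's English description precedes it below -/
import Mathlib

section
/- (Δ₂ implies limit computability) Suppose p : ℕ → Prop satisfies: there are computable predicates q, r : ℕ → ℕ → ℕ → Bool such that for all m, p m ↔ ∃ z, ∀ y, q z y m = true, and ¬ p m ↔ ∃ z, ∀ y, r z y m = true. Then p is limit computable: there is a computable g : ℕ → ℕ → Bool such that for every m there exists N with (∀ n ≥ N, g m n = g m N) and (p m ↔ g m N = true). -/
set_option maxHeartbeats 1000000

namespace Delta2Aux

def step (q r : ℕ → ℕ → ℕ → Bool) (m k y : ℕ) : Bool :=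
  bif k.bodd then r k.div2 y m else q k.div2 y m

/-- `B q r m n k = true` iff `step q r m k y = true` for all `y ≤ n`. -/
def B (q r : ℕ → ℕ → ℕ → Bool) (m n k : ℕ) : Bool :=
  Nat.rec (motive := fun _ => Bool) (step q r m k 0)
    (fun y IH => bif IH then step q r m k (y+1) else false) n

theorem B_succ (q r m n k) :
    B q r m (n+1) k = (bif B q r m n k then step q r m k (n+1) else false) := rfl

/-- least `k < j` with `B q r m n k = true`, if any. -/
def F (q r : ℕ → ℕ → ℕ → Bool) (m n j : ℕ) : Option ℕ :=
  Nat.rec (motive := fun _ => Option ℕ) none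
    (fun k IH => Option.casesOn IH (bif B q r m n k then some k else none) (fun v => some v)) j

theorem F_succ (q r m n j) :
    F q r m n (j+1) = Option.casesOn (F q r m n j)
      (bif B q r m n j then some j else none) (fun v => some v) := rfl

def g (q r : ℕ → ℕ → ℕ → Bool) (m n : ℕ) : Bool :=
  Option.casesOn (F q r m n (2*n+2)) false (fun k => !k.bodd)

theorem B_iff (q r m n k) : B q r m n k = true ↔ ∀ y ≤ n, step q r m k y = true := by
  induction n with
  | zero =>
    constructor
    · intro h y hy; rwa [Nat.le_zero.mp hy]
    · intro h; exact h 0 le_rfl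
  | succ n ih =>
    rw [B_succ]
    cases hb : B q r m n k with
    | false =>
      simp only [cond_false]
      constructor
      · intro h; exact absurd h (by simp)
      · intro h
        exact absurd (ih.mpr fun y hy => h y (hy.trans (Nat.le_succ n))) (by simp [hb])
    | true =>
      simp only [cond_true]
      constructor
      · intro h y hy
        rcases Nat.le_succ_iff_eq_or_le.mp hy with h' | h'
        · subst h'; exact h
        · exact (ih.mp hb) y h'
      · exact fun h => h (n+1) le_rfl

theorem F_none (q r m n j) (h : ∀ k < j, B q r m n k = false) : F q r m n j = none := by
  induction j with
  | zero => rfl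
  | succ j ih =>
    rw [F_succ, ih fun k hk => h k (hk.trans (Nat.lt_succ_self j))]
    simp [h j (Nat.lt_succ_self j)]

theorem F_some (q r m n j k₀) (hj : k₀ < j) (hmin : ∀ k < k₀, B q r m n k = false)
    (hk : B q r m n k₀ = true) : F q r m n j = some k₀ := by
  induction j with
  | zero => omega
  | succ j ih =>
    rw [F_succ]
    rcases Nat.lt_succ_iff_lt_or_eq.mp hj with h | h
    · rw [ih h]
    · subst h; rw [F_none q r m n k₀ hmin]; simp [hk]

end Delta2Aux

open Delta2Aux in
/-- Δ₂ implies limit computability. -/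
theorem delta2_implies_limit_computable (p : ℕ → Prop)
    (q r : ℕ → ℕ → ℕ → Bool)
    (hq : Computable fun x : ℕ × ℕ × ℕ => q x.1 x.2.1 x.2.2)
    (hr : Computable fun x : ℕ × ℕ × ℕ => r x.1 x.2.1 x.2.2)
    (hpq : ∀ m, p m ↔ ∃ z, ∀ y, q z y m = true)
    (hpr : ∀ m, ¬ p m ↔ ∃ z, ∀ y, r z y m = true) :
    ∃ g : ℕ → ℕ → Bool, Computable₂ g ∧
      ∀ m, ∃ N, (∀ n ≥ N, g m n = g m N) ∧ (p m ↔ g m N = true) := by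
  classical
  refine ⟨g q r, ?_, ?_⟩
  · -- computability
    have hg1 : Computable fun x : ℕ × ℕ × ℕ => ((x.2.1.div2, x.2.2, x.1) : ℕ × ℕ × ℕ) :=
      (Computable.nat_div2.comp (Computable.fst.comp Computable.snd)).pair
        ((Computable.snd.comp Computable.snd).pair Computable.fst)
    have hc1 : Computable fun x : ℕ × ℕ × ℕ => q x.2.1.div2 x.2.2 x.1 :=
      (hq.comp hg1).of_eq fun _ => rfl
    have hc2 : Computable fun x : ℕ × ℕ × ℕ => r x.2.1.div2 x.2.2 x.1 :=
      (hr.comp hg1).of_eq fun _ => rfl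
    have hbodd : Computable fun x : ℕ × ℕ × ℕ => x.2.1.bodd :=
      Computable.nat_bodd.comp (Computable.fst.comp Computable.snd)
    have hstep : Computable fun x : ℕ × ℕ × ℕ => step q r x.1 x.2.1 x.2.2 :=
      (Computable.cond hbodd hc2 hc1).of_eq fun _ => rfl
    have hB : Computable fun x : ℕ × ℕ × ℕ => B q r x.1 x.2.1 x.2.2 := by
      have hp1 : Computable fun x : ℕ × ℕ × ℕ => ((x.1, x.2.2, 0) : ℕ × ℕ × ℕ) :=
        Computable.fst.pair ((Computable.snd.comp Computable.snd).pair (Computable.const 0))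
      have h1 : Computable fun x : ℕ × ℕ × ℕ => step q r x.1 x.2.2 0 :=
        (hstep.comp hp1).of_eq fun _ => rfl
      have hp2 : Computable fun a : (ℕ × ℕ × ℕ) × ℕ × Bool =>
          ((a.1.1, a.1.2.2, a.2.1 + 1) : ℕ × ℕ × ℕ) :=
        (Computable.fst.comp Computable.fst).pair
          ((Computable.snd.comp (Computable.snd.comp Computable.fst)).pair
            (Computable.succ.comp (Computable.fst.comp Computable.snd)))
      have hs2 : Computable fun a : (ℕ × ℕ × ℕ) × ℕ × Bool =>
          step q r a.1.1 a.1.2.2 (a.2.1 + 1) :=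
        (hstep.comp hp2).of_eq fun _ => rfl
      have h2 : Computable₂ fun (x : ℕ × ℕ × ℕ) (yIH : ℕ × Bool) =>
          (bif yIH.2 then step q r x.1 x.2.2 (yIH.1 + 1) else false) :=
        ((Computable.cond (Computable.snd.comp Computable.snd) hs2
          (Computable.const false)).of_eq fun _ => rfl).to₂
      exact (Computable.nat_rec (Computable.fst.comp Computable.snd) h1 h2).of_eq fun x => rfl
    have hF : Computable fun x : ℕ × ℕ => F q r x.1 x.2 (2 * x.2 + 2) := by
      have hf : Computable fun x : ℕ × ℕ => 2 * x.2 + 2 :=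
        ((Primrec.succ.comp (Primrec.succ.comp
          (Primrec.nat_mul.comp (Primrec.const 2) Primrec.snd))).to_comp).of_eq fun _ => rfl
      have hp3 : Computable fun a : (ℕ × ℕ) × ℕ × Option ℕ =>
          ((a.1.1, a.1.2, a.2.1) : ℕ × ℕ × ℕ) :=
        (Computable.fst.comp Computable.fst).pair
          ((Computable.snd.comp Computable.fst).pair (Computable.fst.comp Computable.snd))
      have hBc : Computable fun a : (ℕ × ℕ) × ℕ × Option ℕ => B q r a.1.1 a.1.2 a.2.1 :=
        (hB.comp hp3).of_eq fun _ => rfl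
      have hinner : Computable fun a : (ℕ × ℕ) × ℕ × Option ℕ =>
          (bif B q r a.1.1 a.1.2 a.2.1 then some a.2.1 else (none : Option ℕ)) :=
        (Computable.cond hBc (Computable.option_some.comp (Computable.fst.comp Computable.snd))
          (Computable.const none)).of_eq fun _ => rfl
      have hh : Computable₂ fun (x : ℕ × ℕ) (kIH : ℕ × Option ℕ) =>
          Option.casesOn (motive := fun _ => Option ℕ) kIH.2
            (bif B q r x.1 x.2 kIH.1 then some kIH.1 else none) (fun v => some v) :=
        ((Computable.option_casesOn (Computable.snd.comp Computable.snd) hinner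
          (Computable.option_some.comp Computable.snd).to₂).of_eq fun _ => rfl).to₂
      exact (Computable.nat_rec hf (Computable.const (none : Option ℕ)) hh).of_eq fun x => rfl
    have hb2 : Computable fun x : (ℕ × ℕ) × ℕ => x.2.bodd :=
      Computable.nat_bodd.comp Computable.snd
    have hnot : Computable fun x : (ℕ × ℕ) × ℕ => !x.2.bodd :=
      (Computable.cond hb2 (Computable.const false) (Computable.const true)).of_eq fun x => by
        cases hx : x.2.bodd <;> simp [hx]
    exact (Computable.option_casesOn hF (Computable.const false) hnot.to₂).of_eq fun x => rfl
  · intro m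
    have hex : ∃ k, ∀ y, step q r m k y = true := by
      by_cases hp : p m
      · obtain ⟨z, hz⟩ := (hpq m).mp hp
        refine ⟨2 * z, fun y => ?_⟩
        have h1 : (2*z).bodd = false := by simp [Nat.bodd_mul]
        have h2 : (2*z).div2 = z := by rw [Nat.div2_val]; omega
        rw [step, h1, h2, cond_false]; exact hz y
      · obtain ⟨z, hz⟩ := (hpr m).mp hp
        refine ⟨2 * z + 1, fun y => ?_⟩
        have h1 : (2*z+1).bodd = true := by simp [Nat.bodd_add, Nat.bodd_mul]
        have h2 : (2*z+1).div2 = z := by rw [Nat.div2_val]; omega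
        rw [step, h1, h2, cond_true]; exact hz y
    set k₀ := Nat.find hex with hk₀def
    have hk₀ : ∀ y, step q r m k₀ y = true := Nat.find_spec hex
    have hfail : ∀ k < k₀, ∃ y, step q r m k y = false := by
      intro k hk
      have := Nat.find_min hex hk
      push_neg at this
      obtain ⟨y, hy⟩ := this
      exact ⟨y, by simpa using hy⟩
    have hyf : ∀ k < k₀, ∃ yk, step q r m k yk = false := hfail
    choose yf hyfspec using hfail
    -- turn the partial choice into a total bound
    set N := max k₀ ((Finset.range k₀).sup fun k =>
      if h : k < k₀ then yf k h else 0) with hN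
    have hNk₀ : k₀ ≤ N := le_max_left _ _
    have hBfalse : ∀ n ≥ N, ∀ k < k₀, B q r m n k = false := by
      intro n hn k hk
      have hy' : yf k hk ≤ n := by
        have h1 : (if h : k < k₀ then yf k h else 0) ≤ (Finset.range k₀).sup fun k =>
            if h : k < k₀ then yf k h else 0 :=
          Finset.le_sup (f := fun k => if h : k < k₀ then yf k h else 0) (Finset.mem_range.mpr hk)
        rw [dif_pos hk] at h1
        exact le_trans (le_trans h1 (le_max_right _ _)) hn
      by_contra hB
      have hB' : B q r m n k = true := by
        cases hBk : B q r m n k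
        · exact absurd hBk hB
        · rfl
      have := (B_iff q r m n k).mp hB' (yf k hk) hy'
      rw [hyfspec k hk] at this
      exact Bool.false_ne_true this
    have hBtrue : ∀ n, B q r m n k₀ = true := fun n =>
      (B_iff q r m n k₀).mpr fun y _ => hk₀ y
    have hgval : ∀ n ≥ N, g q r m n = !k₀.bodd := by
      intro n hn
      have hlt : k₀ < 2 * n + 2 := by omega
      rw [g, F_some q r m n _ k₀ hlt (hBfalse n hn) (hBtrue n)]
    refine ⟨N, fun n hn => by rw [hgval n hn, hgval N le_rfl], ?_⟩
    rw [hgval N le_rfl]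
    constructor
    · intro hp
      cases hb : k₀.bodd
      · rfl
      · exfalso
        have : ∀ y, r k₀.div2 y m = true := fun y => by
          have h := hk₀ y; rwa [step, hb, cond_true] at h
        exact (hpr m).mpr ⟨k₀.div2, this⟩ hp
    · intro hg'
      cases hb : k₀.bodd
      · have : ∀ y, q k₀.div2 y m = true := fun y => by
          have h := hk₀ y; rwa [step, hb, cond_false] at h
        exact (hpq m).mpr ⟨k₀.div2, this⟩
      · rw [hb] at hg'; simp at hg'
end

section
/- If a run Ω is a ⊤-delay of a run Γ, then Γ is a ⊥-delay of Ω. -/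
/-- `IsNth x Γ k i` : the `k`-th (1-indexed) `x`-labeled move of the run `Γ`
occurs at position `i`. -/
def IsNth {M : Type*} (x : Bool) (Γ : List (Bool × M)) (k i : ℕ) : Prop :=
  ∃ h : i < Γ.length,
    (Γ.get ⟨i, h⟩).1 = x ∧ ((Γ.take i).countP (fun m => m.1 == x)) + 1 = k

/-- `LeftOf x y Γ k n` : the `k`-th `x`-labeled move of `Γ` occurs before
(to the left of) the `n`-th `y`-labeled move of `Γ`. -/
def LeftOf {M : Type*} (x y : Bool) (Γ : List (Bool × M)) (k n : ℕ) : Prop :=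
  ∃ i j, i < j ∧ IsNth x Γ k i ∧ IsNth y Γ n j

/-- `IsDelay w Γ Ω` : the run `Ω` is a `w`-delay of the run `Γ` (labels: `true` = ⊤,
`false` = ⊥): the two runs have the same subsequences of `x`-labeled moves for each
label `x`, and whenever the `k`-th `w`-labeled move of `Γ` occurs before the `n`-th
`(¬w)`-labeled move of `Γ`, the same holds in `Ω`. -/
def IsDelay {M : Type*} (w : Bool) (Γ Ω : List (Bool × M)) : Prop :=
  (∀ x : Bool, Ω.filter (fun m => m.1 == x) = Γ.filter (fun m => m.1 == x)) ∧
  ∀ k n, LeftOf w (!w) Γ k n → LeftOf w (!w) Ω k n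

/-!
Both runs have the same `x`-labeled moves for each label `x`, so the `k`-th ⊥-move and the `n`-th
⊤-move exist in `Γ` as soon as they exist in `Ω`, and, having different labels, they sit at
different positions. If the ⊤-move came first in `Γ`, the ⊤-delay condition would put it first in
`Ω` as well; so whenever the ⊥-move comes first in `Ω` it also comes first in `Γ`.
-/

section Runs

variable {M : Type*} {x y : Bool} {Γ Ω : List (Bool × M)} {k n i j : ℕ}

theorem IsNth.countP_take_succ (h : IsNth x Γ k i) :
    (Γ.take (i + 1)).countP (·.1 == x) = k := by
  obtain ⟨hi, hx, hk⟩ := h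
  rw [List.take_add_one, List.getElem?_eq_getElem hi, List.countP_append]
  simp_all

theorem IsNth.not_lt (h : IsNth x Γ k i) (h' : IsNth x Γ k j) : ¬i < j := fun hij => by
  have hle := (List.take_sublist_take_left (l := Γ) hij).countP_le (p := (·.1 == x))
  obtain ⟨-, -, hk⟩ := h'
  rw [h.countP_take_succ] at hle
  omega

theorem IsNth.unique (h : IsNth x Γ k i) (h' : IsNth x Γ k j) : i = j :=
  le_antisymm (Nat.le_of_not_lt (h'.not_lt h)) (Nat.le_of_not_lt (h.not_lt h'))

theorem IsNth.ne (hxy : x ≠ y) (h : IsNth x Γ k i) (h' : IsNth y Γ n j) : i ≠ j := by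
  rintro rfl
  exact hxy (h.2.1.symm.trans h'.2.1)

theorem IsNth.one_le (h : IsNth x Γ k i) : 1 ≤ k := by
  have := h.2.2
  omega

theorem IsNth.le_countP (h : IsNth x Γ k i) : k ≤ Γ.countP (·.1 == x) :=
  h.countP_take_succ ▸ (List.take_sublist _ _).countP_le

theorem IsNth.cons (a : Bool × M) (h : IsNth x Γ k i) :
    IsNth x (a :: Γ) (k + if a.1 == x then 1 else 0) (i + 1) := by
  obtain ⟨hi, hx, hk⟩ := h
  refine ⟨by simpa using hi, by simpa using hx, ?_⟩
  rw [List.take_succ_cons, List.countP_cons, ← hk]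
  omega

theorem exists_isNth_of_le_countP (hk : 1 ≤ k) (hkΓ : k ≤ Γ.countP (·.1 == x)) :
    ∃ i, IsNth x Γ k i := by
  induction Γ generalizing k with
  | nil => simp at hkΓ; omega
  | cons a Γ ih =>
    rw [List.countP_cons] at hkΓ
    by_cases ha : a.1 = x
    · obtain rfl | hk := hk.eq_or_lt
      · exact ⟨0, by simp [IsNth, ha]⟩
      · obtain ⟨i, hi⟩ := ih (k := k - 1) (by omega) (by simp [ha] at hkΓ; omega)
        exact ⟨i + 1, by simpa [ha, Nat.sub_add_cancel hk.le] using hi.cons a⟩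
    · obtain ⟨i, hi⟩ := ih hk (by simpa [ha] using hkΓ)
      exact ⟨i + 1, by simpa [ha] using hi.cons a⟩

theorem exists_isNth_iff : (∃ i, IsNth x Γ k i) ↔ 1 ≤ k ∧ k ≤ Γ.countP (·.1 == x) :=
  ⟨fun ⟨_, h⟩ => ⟨h.one_le, h.le_countP⟩, fun ⟨hk, hkΓ⟩ => exists_isNth_of_le_countP hk hkΓ⟩

theorem exists_isNth_congr (hΓΩ : Γ.filter (·.1 == x) = Ω.filter (·.1 == x)) :
    (∃ i, IsNth x Γ k i) ↔ ∃ i, IsNth x Ω k i := by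
  simp only [exists_isNth_iff, List.countP_eq_length_filter, hΓΩ]

theorem LeftOf.not_leftOf (h : LeftOf x y Γ k n) : ¬LeftOf y x Γ n k := by
  rintro ⟨j', i', hji, hj', hi'⟩
  obtain ⟨i, j, hij, hi, hj⟩ := h
  rw [hi.unique hi', hj.unique hj'] at hij
  omega

theorem leftOf_or_leftOf (hxy : x ≠ y) (h : IsNth x Γ k i) (h' : IsNth y Γ n j) :
    LeftOf x y Γ k n ∨ LeftOf y x Γ n k :=
  (Nat.lt_or_gt_of_ne (h.ne hxy h')).imp (⟨i, j, ·, h, h'⟩) (⟨j, i, ·, h', h⟩)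

theorem IsDelay.not_swap {w : Bool} (h : IsDelay w Γ Ω) : IsDelay (!w) Ω Γ := by
  obtain ⟨hfilter, hleft⟩ := h
  refine ⟨fun x => (hfilter x).symm, fun k n hΩ => ?_⟩
  rw [Bool.not_not] at hΩ ⊢
  obtain ⟨_, _, _, hk, hn⟩ := id hΩ
  obtain ⟨i, hi⟩ := (exists_isNth_congr (hfilter _)).mp ⟨_, hk⟩
  obtain ⟨j, hj⟩ := (exists_isNth_congr (hfilter _)).mp ⟨_, hn⟩
  refine (leftOf_or_leftOf (Bool.not_ne_self w) hi hj).resolve_right fun hΓ => ?_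
  exact (hleft n k hΓ).not_leftOf hΩ

end Runs

/-- If `Ω` is a ⊤-delay of `Γ`, then `Γ` is a ⊥-delay of `Ω`. -/
theorem bot_delay_of_top_delay {M : Type*} (Γ Ω : List (Bool × M))
    (h : IsDelay true Γ Ω) : IsDelay false Ω Γ := by
  exact h.not_swap
end
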